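/- arXiv:1611.03387 — 2 statements merged into one kernel-verified Lean document; each statement's English description precedes it below -/
import Mathlib

section
/- For k odd, the set of chained linear alternating sign matrices ASM^-_{n,k} is in bijection with (k+1)/2-tuples of n×n alternating sign matrices: in any element of ASM^-_{n,k}, each even-indexed matrix is the zero matrix and each odd-indexed matrix is an n×n alternating sign matrix. -/
/-- `M` is an `n×n` alternating sign matrix: entries in `{-1,0,1}`, all partial row and
column sums equal to `0` or `1`, and every full row and column sum equal to `1`. -/
def IsASM (n : ℕ) (M : Matrix (Fin n) (Fin n) ℤ) : Prop :=
  (∀ i j, M i j = -1 ∨ M i j = 0 ∨ M i j = 1) ∧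
  (∀ i, (∑ j, M i j) = 1) ∧ (∀ j, (∑ i, M i j) = 1) ∧
  (∀ i : Fin n, ∀ m : ℕ,
    (∑ j ∈ Finset.univ.filter fun j : Fin n => (j : ℕ) < m, M i j) = 0 ∨
    (∑ j ∈ Finset.univ.filter fun j : Fin n => (j : ℕ) < m, M i j) = 1) ∧
  (∀ j : Fin n, ∀ m : ℕ,
    (∑ i ∈ Finset.univ.filter fun i : Fin n => (i : ℕ) < m, M i j) = 0 ∨
    (∑ i ∈ Finset.univ.filter fun i : Fin n => (i : ℕ) < m, M i j) = 1)


/-- Chained linear alternating sign matrices: a `k`-tuple of `n×n` `{-1,0,1}`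
matrices whose partial row sums lie in `{0,1}`, whose chained row/column partial
sums lie in `{0,1}` (with `A^(0)` the zero matrix), and whose total entry sum is the
maximum `n⌈k/2⌉`. -/
def IsChainedLinASM (n k : ℕ) (A : Fin k → Matrix (Fin n) (Fin n) ℤ) : Prop :=
  (∀ ℓ i j, A ℓ i j = -1 ∨ A ℓ i j = 0 ∨ A ℓ i j = 1) ∧
  (∀ ℓ : Fin k, ∀ i : Fin n, ∀ m : ℕ,
    (∑ j ∈ Finset.univ.filter fun j : Fin n => (j : ℕ) < m, A ℓ i j) = 0 ∨
    (∑ j ∈ Finset.univ.filter fun j : Fin n => (j : ℕ) < m, A ℓ i j) = 1) ∧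
  (∀ ℓ : Fin k, ∀ i : Fin n, ∀ m : ℕ,
    ((∑ j, (if ℓ.val = 0 then (0 : ℤ)
        else A ⟨ℓ.val - 1, Nat.lt_of_le_of_lt (Nat.sub_le _ _) ℓ.isLt⟩ i j)) +
      ∑ j ∈ Finset.univ.filter fun j : Fin n => (j : ℕ) < m, A ℓ j.rev i) = 0 ∨
    ((∑ j, (if ℓ.val = 0 then (0 : ℤ)
        else A ⟨ℓ.val - 1, Nat.lt_of_le_of_lt (Nat.sub_le _ _) ℓ.isLt⟩ i j)) +
      ∑ j ∈ Finset.univ.filter fun j : Fin n => (j : ℕ) < m, A ℓ j.rev i) = 1) ∧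
  (∑ ℓ, ∑ i, ∑ j, A ℓ i j) = ((n * ((k + 1) / 2) : ℕ) : ℤ)


open Finset

section Aux
variable {n : ℕ}

lemma myFilterLtUniv {m : ℕ} (h : n ≤ m) :
    (univ.filter fun j : Fin n => (j : ℕ) < m) = univ := by
  ext j; simp only [mem_filter, mem_univ, true_and, iff_true]; omega

lemma mySumFilterSucc (f : Fin n → ℤ) {m : ℕ} (hm : m < n) :
    (∑ j ∈ univ.filter fun j : Fin n => (j : ℕ) < m + 1, f j)
      = (∑ j ∈ univ.filter fun j : Fin n => (j : ℕ) < m, f j) + f ⟨m, hm⟩ := by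
  have h : (univ.filter fun j : Fin n => (j : ℕ) < m + 1)
      = insert ⟨m, hm⟩ (univ.filter fun j : Fin n => (j : ℕ) < m) := by
    ext j; simp [Fin.ext_iff]; omega
  rw [h, sum_insert (by simp)]
  ring

lemma mySumRev (f : Fin n → ℤ) : ∑ j, f (Fin.rev j) = ∑ j, f j :=
  Fintype.sum_bijective Fin.rev Fin.rev_bijective _ _ (fun _ => rfl)

lemma mySumSplit (f : Fin n → ℤ) {m : ℕ} (hm : m ≤ n) :
    (∑ j ∈ univ.filter fun j : Fin n => (j : ℕ) < m, f j)
      + (∑ j ∈ univ.filter fun j : Fin n => (j : ℕ) < n - m, f j.rev)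
      = ∑ j, f j := by
  have h2 : (∑ j ∈ univ.filter fun j : Fin n => (j : ℕ) < n - m, f j.rev)
      = ∑ j ∈ univ.filter fun j : Fin n => ¬ (j : ℕ) < m, f j := by
    apply Finset.sum_nbij' (i := fun j => Fin.rev j) (j := fun j => Fin.rev j)
    · intro a ha
      simp only [mem_filter, mem_univ, true_and, Fin.val_rev] at ha ⊢
      have := a.isLt; omega
    · intro a ha
      simp only [mem_filter, mem_univ, true_and, Fin.val_rev] at ha ⊢
      have := a.isLt; omega
    · intro a _; exact Fin.rev_rev a
    · intro a _; exact Fin.rev_rev a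
    · intro a _; rfl
  rw [h2, Finset.sum_filter_add_sum_filter_not]

lemma myEachOne {f : Fin n → ℤ} (hle : ∀ i, f i ≤ 1) (hsum : ∑ i, f i = n) :
    ∀ i, f i = 1 := by
  intro i
  by_contra hi
  have hlt : f i < 1 := lt_of_le_of_ne (hle i) hi
  have h := Finset.sum_lt_sum (g := fun _ : Fin n => (1:ℤ))
    (fun j _ => hle j) ⟨i, mem_univ i, hlt⟩
  rw [hsum] at h
  simp at h

lemma myEachZero {f : Fin n → ℤ} (hge : ∀ i, 0 ≤ f i) (hsum : ∑ i, f i = 0) :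
    ∀ i, f i = 0 := by
  intro i
  have := (Finset.sum_eq_zero_iff_of_nonneg (fun j _ => hge j)).mp hsum
  exact this i (mem_univ i)

lemma myRangeSum (n : ℕ) : ∀ k : ℕ,
    (∑ j ∈ range k, if j % 2 = 0 then (n:ℤ) else 0) = ((n * ((k+1)/2) : ℕ) : ℤ) := by
  intro k
  induction k with
  | zero => simp
  | succ k ih =>
    rw [sum_range_succ, ih]
    rcases Nat.mod_two_eq_zero_or_one k with h | h
    · rw [if_pos h]
      have : n * ((k+1+1)/2) = n * ((k+1)/2) + n := by
        have : (k+1+1)/2 = (k+1)/2 + 1 := by omega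
        rw [this]; ring
      rw [this]; push_cast; ring
    · rw [if_neg (by omega)]
      have : (k+1+1)/2 = (k+1)/2 := by omega
      rw [this]; ring

lemma myZeroLemma (M : Matrix (Fin n) (Fin n) ℤ)
    (hrow : ∀ (i : Fin n) (m : ℕ),
      (∑ j ∈ univ.filter fun j : Fin n => (j : ℕ) < m, M i j) = 0 ∨
      (∑ j ∈ univ.filter fun j : Fin n => (j : ℕ) < m, M i j) = 1)
    (hcol : ∀ (i : Fin n) (m : ℕ),
      (∑ j ∈ univ.filter fun j : Fin n => (j : ℕ) < m, M j.rev i) = -1 ∨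
      (∑ j ∈ univ.filter fun j : Fin n => (j : ℕ) < m, M j.rev i) = 0) :
    M = 0 := by
  classical
  by_contra h
  have hne : ∃ i j, M i j ≠ 0 := by
    by_contra h'; push_neg at h'
    exact h (by ext i j; simp [h' i j])
  have hSne : (univ.filter fun i : Fin n => ∃ j, M i j ≠ 0).Nonempty := by
    obtain ⟨i, j, hij⟩ := hne
    exact ⟨i, by simp only [mem_filter, mem_univ, true_and]; exact ⟨j, hij⟩⟩
  set S := univ.filter fun i : Fin n => ∃ j, M i j ≠ 0 with hS
  set i₀ := S.max' hSne with hi₀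
  have hi₀mem : i₀ ∈ S := S.max'_mem hSne
  have hbelow : ∀ i : Fin n, i₀ < i → ∀ j, M i j = 0 := by
    intro i hi j
    by_contra hij
    have : i ∈ S := by simp only [hS, mem_filter, mem_univ, true_and]; exact ⟨j, hij⟩
    exact absurd (S.le_max' i this) (not_le.mpr hi)
  obtain ⟨j₀', hj₀'⟩ : ∃ j, M i₀ j ≠ 0 := by
    simpa only [hS, mem_filter, mem_univ, true_and] using hi₀mem
  have hTne : (univ.filter fun j : Fin n => M i₀ j ≠ 0).Nonempty :=
    ⟨j₀', by simpa using hj₀'⟩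
  set j₀ := (univ.filter fun j : Fin n => M i₀ j ≠ 0).min' hTne with hj₀
  have hj₀mem : M i₀ j₀ ≠ 0 := by
    have := (univ.filter fun j : Fin n => M i₀ j ≠ 0).min'_mem hTne
    simpa using this
  have hleft : ∀ j : Fin n, j < j₀ → M i₀ j = 0 := by
    intro j hj
    by_contra hij
    exact absurd ((univ.filter fun j : Fin n => M i₀ j ≠ 0).min'_le j (by simpa using hij))
      (not_le.mpr hj)
  have hP0 : (∑ j ∈ univ.filter fun j : Fin n => (j : ℕ) < (j₀ : ℕ), M i₀ j) = 0 := by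
    apply Finset.sum_eq_zero
    intro j hjmem
    simp only [mem_filter, mem_univ, true_and] at hjmem
    exact hleft j hjmem
  have hP1 : M i₀ j₀ = 1 := by
    have := hrow i₀ ((j₀ : ℕ) + 1)
    rw [mySumFilterSucc _ j₀.isLt, hP0, zero_add] at this
    have he : (⟨(j₀ : ℕ), j₀.isLt⟩ : Fin n) = j₀ := by ext; rfl
    rw [he] at this
    rcases this with h' | h'
    · exact absurd h' hj₀mem
    · exact h'
  have hn : (n : ℕ) - 1 - (i₀ : ℕ) < n := by have := i₀.isLt; omega
  have hQ0 : (∑ j ∈ univ.filter fun j : Fin n => (j : ℕ) < n - 1 - (i₀ : ℕ), M j.rev j₀) = 0 := by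
    apply Finset.sum_eq_zero
    intro j hjmem
    simp only [mem_filter, mem_univ, true_and] at hjmem
    apply hbelow
    rw [Fin.lt_iff_val_lt_val, Fin.val_rev]
    have := j.isLt; have := i₀.isLt; omega
  have hrevd : (Fin.rev ⟨n - 1 - (i₀ : ℕ), hn⟩ : Fin n) = i₀ := by
    ext
    rw [Fin.val_rev]
    have hv : ((⟨n - 1 - (i₀ : ℕ), hn⟩ : Fin n) : ℕ) = n - 1 - (i₀ : ℕ) := rfl
    rw [hv]; have := i₀.isLt; omega
  have := hcol j₀ (n - 1 - (i₀ : ℕ) + 1)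
  rw [mySumFilterSucc _ hn, hQ0, zero_add, hrevd, hP1] at this
  omega

end Aux

lemma myBackward (n k : ℕ) (A : Fin k → Matrix (Fin n) (Fin n) ℤ)
    (hz : ∀ ℓ : Fin k, ℓ.val % 2 = 1 → A ℓ = 0)
    (ha : ∀ ℓ : Fin k, ℓ.val % 2 = 0 → IsASM n (A ℓ)) :
    IsChainedLinASM n k A := by
  refine ⟨?_, ?_, ?_, ?_⟩
  · intro ℓ i j
    rcases Nat.mod_two_eq_zero_or_one ℓ.val with hp | hp
    · exact (ha ℓ hp).1 i j
    · right; left; rw [hz ℓ hp]; rfl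
  · intro ℓ i m
    rcases Nat.mod_two_eq_zero_or_one ℓ.val with hp | hp
    · exact (ha ℓ hp).2.2.2.1 i m
    · left; rw [hz ℓ hp]; simp
  · intro ℓ i m
    rcases Nat.mod_two_eq_zero_or_one ℓ.val with hp | hp
    · have hprev : (∑ j, (if ℓ.val = 0 then (0:ℤ)
          else A ⟨ℓ.val - 1, Nat.lt_of_le_of_lt (Nat.sub_le _ _) ℓ.isLt⟩ i j)) = 0 := by
        by_cases h0 : ℓ.val = 0
        · simp [h0]
        · have hzz : A ⟨ℓ.val - 1, Nat.lt_of_le_of_lt (Nat.sub_le _ _) ℓ.isLt⟩ = 0 :=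
            hz _ (show (ℓ.val - 1) % 2 = 1 by omega)
          simp [if_neg h0, hzz]
      rw [hprev]
      simp only [zero_add]
      have hasm := ha ℓ hp
      by_cases hmn : n ≤ m
      · rw [myFilterLtUniv hmn, mySumRev (fun x => A ℓ x i)]
        right; exact hasm.2.2.1 i
      · have hsplit := mySumSplit (f := fun x => A ℓ x i) (Nat.sub_le n m)
        rw [show n - (n - m) = m from by omega] at hsplit
        beta_reduce at hsplit
        have hh1 := hasm.2.2.2.2 i (n - m)
        have hh2 := hasm.2.2.1 i
        omega
    · have hne : ℓ.val ≠ 0 := by omega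
      have hprev : (∑ j, (if ℓ.val = 0 then (0:ℤ)
          else A ⟨ℓ.val - 1, Nat.lt_of_le_of_lt (Nat.sub_le _ _) ℓ.isLt⟩ i j)) = 1 := by
        simp only [if_neg hne]
        exact (ha ⟨ℓ.val - 1, Nat.lt_of_le_of_lt (Nat.sub_le _ _) ℓ.isLt⟩
          (show (ℓ.val - 1) % 2 = 0 by omega)).2.1 i
      have hpart : (∑ j ∈ Finset.univ.filter fun j : Fin n => (j:ℕ) < m, A ℓ j.rev i) = 0 := by
        rw [hz ℓ hp]; simp
      rw [hprev, hpart]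
      right; ring
  · have hstep : ∀ ℓ : Fin k, (∑ i, ∑ j, A ℓ i j) = (if ℓ.val % 2 = 0 then (n:ℤ) else 0) := by
      intro ℓ
      rcases Nat.mod_two_eq_zero_or_one ℓ.val with hp | hp
      · rw [if_pos hp]
        have hr := (ha ℓ hp).2.1
        calc (∑ i, ∑ j, A ℓ i j) = ∑ _i : Fin n, (1:ℤ) :=
              Finset.sum_congr rfl (fun i _ => hr i)
          _ = n := by simp
      · rw [if_neg (by omega), hz ℓ hp]; simp
    calc (∑ ℓ, ∑ i, ∑ j, A ℓ i j) = ∑ ℓ : Fin k, (if ℓ.val % 2 = 0 then (n:ℤ) else 0) :=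
        Finset.sum_congr rfl (fun ℓ _ => hstep ℓ)
      _ = ∑ j ∈ Finset.range k, (if j % 2 = 0 then (n:ℤ) else 0) :=
        Fin.sum_univ_eq_sum_range (fun j => if j % 2 = 0 then (n:ℤ) else 0) k
      _ = _ := myRangeSum n k

lemma myForward (n k : ℕ) (hko : Odd k) (A : Fin k → Matrix (Fin n) (Fin n) ℤ)
    (hA : IsChainedLinASM n k A) :
    (∀ ℓ : Fin k, ℓ.val % 2 = 1 → A ℓ = 0) ∧
    (∀ ℓ : Fin k, ℓ.val % 2 = 0 → IsASM n (A ℓ)) := by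
  obtain ⟨h1, h2, h3, h4⟩ := hA
  set r : ℕ → Fin n → ℤ := fun ℓ i => if h : ℓ < k then ∑ j, A ⟨ℓ, h⟩ i j else 0 with hrdef
  set R : ℕ → ℤ := fun ℓ => ∑ i, r ℓ i with hRdef
  have hrpos : ∀ ℓ (h : ℓ < k) i, r ℓ i = ∑ j, A ⟨ℓ, h⟩ i j := by
    intro ℓ h i; simp only [hrdef]; rw [dif_pos h]
  have hrzero : ∀ ℓ, ¬ ℓ < k → ∀ i, r ℓ i = 0 := by
    intro ℓ h i; simp only [hrdef]; rw [dif_neg h]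
  have hRapp : ∀ ℓ, R ℓ = ∑ i, r ℓ i := fun ℓ => by simp only [hRdef]
  have hr01 : ∀ ℓ i, r ℓ i = 0 ∨ r ℓ i = 1 := by
    intro ℓ i
    by_cases h : ℓ < k
    · rw [hrpos ℓ h i]
      have := h2 ⟨ℓ, h⟩ i n
      rwa [myFilterLtUniv le_rfl] at this
    · rw [hrzero ℓ h i]; left; rfl
  have hprevsum : ∀ ℓ : Fin k, ∀ i,
      (∑ j, (if ℓ.val = 0 then (0:ℤ)
        else A ⟨ℓ.val - 1, Nat.lt_of_le_of_lt (Nat.sub_le _ _) ℓ.isLt⟩ i j))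
      = (if ℓ.val = 0 then 0 else r (ℓ.val - 1) i) := by
    intro ℓ i
    by_cases h : ℓ.val = 0
    · simp [h]
    · simp only [if_neg h]
      rw [hrpos _ (Nat.lt_of_le_of_lt (Nat.sub_le _ _) ℓ.isLt)]
  have hchain : ∀ (ℓ : Fin k) (i : Fin n) (m : ℕ),
      ((if ℓ.val = 0 then (0:ℤ) else r (ℓ.val - 1) i) +
        ∑ j ∈ Finset.univ.filter fun j : Fin n => (j:ℕ) < m, A ℓ j.rev i) = 0 ∨
      ((if ℓ.val = 0 then (0:ℤ) else r (ℓ.val - 1) i) +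
        ∑ j ∈ Finset.univ.filter fun j : Fin n => (j:ℕ) < m, A ℓ j.rev i) = 1 := by
    intro ℓ i m
    have := h3 ℓ i m
    rwa [hprevsum ℓ i] at this
  have hchainn : ∀ (ℓ : Fin k) (i : Fin n),
      ((if ℓ.val = 0 then (0:ℤ) else r (ℓ.val - 1) i) + ∑ j, A ℓ j i) = 0 ∨
      ((if ℓ.val = 0 then (0:ℤ) else r (ℓ.val - 1) i) + ∑ j, A ℓ j i) = 1 := by
    intro ℓ i
    have := hchain ℓ i n
    rwa [myFilterLtUniv le_rfl, mySumRev (fun j => A ℓ j i)] at this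
  have hCsum : ∀ ℓ : Fin k, (∑ i, ∑ j, A ℓ j i) = R ℓ.val := by
    intro ℓ
    rw [Finset.sum_comm, hRapp]
    exact Finset.sum_congr rfl (fun x _ => by rw [hrpos ℓ.val ℓ.isLt x, Fin.eta])
  have hRlb : ∀ ℓ, 0 ≤ R ℓ := by
    intro ℓ; rw [hRapp]
    exact Finset.sum_nonneg (fun i _ => by rcases hr01 ℓ i with h | h <;> omega)
  have hRub : ∀ ℓ, R ℓ ≤ n := by
    intro ℓ; rw [hRapp]
    calc (∑ i, r ℓ i) ≤ ∑ _i : Fin n, (1:ℤ) :=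
        Finset.sum_le_sum (fun i _ => by rcases hr01 ℓ i with h | h <;> omega)
      _ = n := by simp
  have hRadd : ∀ ℓ : ℕ, R ℓ + R (ℓ+1) ≤ n := by
    intro ℓ
    by_cases h : ℓ + 1 < k
    · have key : ∀ i, r ℓ i + (∑ j, A ⟨ℓ+1, h⟩ j i) ≤ 1 := by
        intro i
        have hc : ((if ℓ+1 = 0 then (0:ℤ) else r (ℓ+1-1) i) + ∑ j, A ⟨ℓ+1, h⟩ j i) = 0 ∨
            ((if ℓ+1 = 0 then (0:ℤ) else r (ℓ+1-1) i) + ∑ j, A ⟨ℓ+1, h⟩ j i) = 1 :=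
          hchainn ⟨ℓ+1, h⟩ i
        rw [if_neg (Nat.succ_ne_zero ℓ), Nat.add_sub_cancel] at hc
        omega
      have e : R ℓ + R (ℓ+1) = ∑ i, (r ℓ i + ∑ j, A ⟨ℓ+1, h⟩ j i) := by
        rw [Finset.sum_add_distrib, ← hRapp]
        have := hCsum ⟨ℓ+1, h⟩
        rw [← this]
      rw [e]
      calc (∑ i, (r ℓ i + ∑ j, A ⟨ℓ+1, h⟩ j i)) ≤ ∑ _i : Fin n, (1:ℤ) :=
          Finset.sum_le_sum (fun i _ => key i)
        _ = n := by simp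
    · have hzz : R (ℓ+1) = 0 := by
        rw [hRapp]; exact Finset.sum_eq_zero (fun i _ => hrzero _ h i)
      rw [hzz, add_zero]; exact hRub ℓ
  have htot : (∑ j ∈ Finset.range k, R j) = ((n * ((k+1)/2) : ℕ) : ℤ) := by
    rw [← Fin.sum_univ_eq_sum_range (fun j => R j) k, ← h4]
    apply Finset.sum_congr rfl
    intro ℓ _
    rw [hRapp]
    exact Finset.sum_congr rfl (fun i _ => by rw [hrpos ℓ.val ℓ.isLt i, Fin.eta])
  obtain ⟨t, ht⟩ := hko
  have hfle : ∀ s : ℕ, (∑ j ∈ Finset.range (2*s), R j) ≤ (n:ℤ) * s := by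
    intro s
    induction s with
    | zero => simp
    | succ s ih =>
      rw [show 2*(s+1) = 2*s + 1 + 1 from by ring, Finset.sum_range_succ,
        Finset.sum_range_succ]
      have := hRadd (2*s)
      push_cast
      linarith
  have htop : (∑ j ∈ Finset.range (2*t), R j) + R (2*t) = (n:ℤ) * (t+1) := by
    have e1 : (∑ j ∈ Finset.range k, R j) = (∑ j ∈ Finset.range (2*t), R j) + R (2*t) := by
      rw [ht, Finset.sum_range_succ]
    rw [← e1, htot]
    have e2 : (k+1)/2 = t+1 := by omega
    rw [e2]; push_cast; ring
  have hEqTop : (∑ j ∈ Finset.range (2*t), R j) = (n:ℤ)*t ∧ R (2*t) = n := by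
    have a := hfle t
    have b := hRub (2*t)
    constructor <;> push_cast at htop ⊢ <;> linarith
  have Qlem : ∀ d s, s + d = t →
      (∑ j ∈ Finset.range (2*s), R j) = (n:ℤ)*s ∧ R (2*s) = n := by
    intro d
    induction d with
    | zero =>
      intro s hs
      have : s = t := by omega
      subst this; exact hEqTop
    | succ d ih =>
      intro s hs
      obtain ⟨hf1, hf2⟩ := ih (s+1) (by omega)
      have hodd : R (2*s+1) = 0 := by
        have h5 := hRadd (2*s+1)
        have h6 := hRlb (2*s+1)
        rw [show 2*s+1+1 = 2*(s+1) from by ring, hf2] at h5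
        linarith
      rw [show 2*(s+1) = 2*s+1+1 from by ring, Finset.sum_range_succ,
        Finset.sum_range_succ, hodd, add_zero] at hf1
      have a := hfle s
      have b := hRub (2*s)
      constructor <;> push_cast at hf1 ⊢ <;> linarith
  have hReven : ∀ s, 2*s < k → R (2*s) = n := by
    intro s hs; exact (Qlem (t - s) s (by omega)).2
  have hRodd : ∀ s, 2*s+1 < k → R (2*s+1) = 0 := by
    intro s hs
    have h5 := hRadd (2*s+1)
    have h6 := hRlb (2*s+1)
    have h7 : R (2*(s+1)) = n := hReven (s+1) (by omega)
    rw [show 2*s+1+1 = 2*(s+1) from by ring, h7] at h5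
    linarith
  have hRval : ∀ j, j < k → R j = if j % 2 = 0 then (n:ℤ) else 0 := by
    intro j hj
    rcases Nat.mod_two_eq_zero_or_one j with hp | hp
    · rw [if_pos hp, show j = 2*(j/2) from by omega]
      exact hReven (j/2) (by omega)
    · rw [if_neg (by omega), show j = 2*(j/2)+1 from by omega]
      exact hRodd (j/2) (by omega)
  have hrval' : ∀ j, j < k → ∀ i, r j i = if j % 2 = 0 then 1 else 0 := by
    intro j hj i
    rcases Nat.mod_two_eq_zero_or_one j with hp | hp
    · rw [if_pos hp]
      have hRs : (∑ x, r j x) = (n:ℤ) := by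
        rw [← hRapp]
        have := hRval j hj; rw [if_pos hp] at this; exact this
      exact myEachOne (f := fun x => r j x)
        (fun x => by show r j x ≤ 1; rcases hr01 j x with h | h <;> omega) hRs i
    · rw [if_neg (by omega)]
      have hRs : (∑ x, r j x) = 0 := by
        rw [← hRapp]
        have := hRval j hj; rw [if_neg (by omega)] at this; exact this
      exact myEachZero (f := fun x => r j x)
        (fun x => by show (0:ℤ) ≤ r j x; rcases hr01 j x with h | h <;> omega) hRs i
  have hprev0 : ∀ ℓ : Fin k, ℓ.val % 2 = 0 → ∀ i,
      (if ℓ.val = 0 then (0:ℤ) else r (ℓ.val - 1) i) = 0 := by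
    intro ℓ hp i
    by_cases h : ℓ.val = 0
    · rw [if_pos h]
    · rw [if_neg h, hrval' (ℓ.val - 1) (by have := ℓ.isLt; omega), if_neg (by omega)]
  have hcval : ∀ ℓ : Fin k, ℓ.val % 2 = 0 → ∀ i, (∑ x, A ℓ x i) = 1 := by
    intro ℓ hp
    have hb : ∀ i, (∑ x, A ℓ x i) ≤ 1 := by
      intro i
      have hc := hchainn ℓ i
      rw [hprev0 ℓ hp i, zero_add] at hc
      omega
    have hsum : (∑ i, ∑ x, A ℓ x i) = (n:ℤ) := by
      rw [hCsum ℓ]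
      have := hRval ℓ.val ℓ.isLt; rw [if_pos hp] at this; exact this
    exact myEachOne (f := fun i => ∑ x, A ℓ x i) hb hsum
  constructor
  · intro ℓ hp
    apply myZeroLemma
    · exact h2 ℓ
    · intro i m
      have hc := hchain ℓ i m
      have hne : ℓ.val ≠ 0 := by omega
      rw [if_neg hne] at hc
      have hr1 : r (ℓ.val - 1) i = 1 := by
        rw [hrval' (ℓ.val - 1) (by have := ℓ.isLt; omega), if_pos (by omega)]
      rw [hr1] at hc
      omega
  · intro ℓ hp
    refine ⟨h1 ℓ, ?_, ?_, h2 ℓ, ?_⟩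
    · intro i
      have := hrval' ℓ.val ℓ.isLt i
      rw [if_pos hp, hrpos ℓ.val ℓ.isLt i] at this
      rw [show ℓ = (⟨ℓ.val, ℓ.isLt⟩ : Fin k) from (Fin.eta ℓ ℓ.isLt).symm]
      exact this
    · intro j; exact hcval ℓ hp j
    · intro j m
      by_cases hmn : n ≤ m
      · rw [myFilterLtUniv hmn]; right; exact hcval ℓ hp j
      · have hsplit := mySumSplit (f := fun x => A ℓ x j) (le_of_not_ge hmn)
        beta_reduce at hsplit
        have hrev := hchain ℓ j (n - m)
        rw [hprev0 ℓ hp j, zero_add] at hrev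
        have hfull := hcval ℓ hp j
        omega

/-- For `k` odd, a chained linear ASM is exactly a tuple whose even-indexed matrices
(1-based: `A^(2), A^(4), ...`) are zero and whose odd-indexed matrices are `n×n`
alternating sign matrices; hence `ASM⁻_{n,k}` is in bijection with `(k+1)/2`-tuples
of `n×n` alternating sign matrices. -/
theorem chained_lin_asm_k_odd (n k : ℕ) (hko : Odd k) :
    (∀ A : Fin k → Matrix (Fin n) (Fin n) ℤ,
      IsChainedLinASM n k A ↔
        ((∀ ℓ : Fin k, ℓ.val % 2 = 1 → A ℓ = 0) ∧
         (∀ ℓ : Fin k, ℓ.val % 2 = 0 → IsASM n (A ℓ)))) ∧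
    Nonempty ({A : Fin k → Matrix (Fin n) (Fin n) ℤ // IsChainedLinASM n k A} ≃
      (Fin ((k + 1) / 2) → {M : Matrix (Fin n) (Fin n) ℤ // IsASM n M})) := by
  have hmain : ∀ A : Fin k → Matrix (Fin n) (Fin n) ℤ,
      IsChainedLinASM n k A ↔
        ((∀ ℓ : Fin k, ℓ.val % 2 = 1 → A ℓ = 0) ∧
         (∀ ℓ : Fin k, ℓ.val % 2 = 0 → IsASM n (A ℓ))) := by
    intro A
    constructor
    · exact myForward n k hko A
    · rintro ⟨hz, ha⟩; exact myBackward n k A hz ha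
  have h2k : ∀ i : Fin ((k+1)/2), 2 * i.val < k := by
    intro i; obtain ⟨t, ht⟩ := hko; have := i.isLt; omega
  have hdiv : ∀ ℓ : Fin k, ℓ.val / 2 < (k+1)/2 := by
    intro ℓ; have := ℓ.isLt; omega
  refine ⟨hmain, ⟨{
    toFun := fun A i => ⟨A.1 ⟨2*i.val, h2k i⟩,
      ((hmain A.1).mp A.2).2 ⟨2*i.val, h2k i⟩ (Nat.mul_mod_right 2 i.val)⟩
    invFun := fun f => ⟨fun ℓ =>
        if h : ℓ.val % 2 = 0 then (f ⟨ℓ.val/2, hdiv ℓ⟩).1 else 0,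
      (hmain _).mpr ⟨fun ℓ hℓ => dif_neg (by omega),
        fun ℓ hℓ => by
          have e : (if h : ℓ.val % 2 = 0 then (f ⟨ℓ.val/2, hdiv ℓ⟩).1 else 0)
              = (f ⟨ℓ.val/2, hdiv ℓ⟩).1 := dif_pos hℓ
          show IsASM n (if h : ℓ.val % 2 = 0 then (f ⟨ℓ.val/2, hdiv ℓ⟩).1 else 0)
          rw [e]
          exact (f ⟨ℓ.val/2, hdiv ℓ⟩).2⟩⟩
    left_inv := by
      intro A
      apply Subtype.ext
      funext ℓ
      show (if h : ℓ.val % 2 = 0 then _ else 0) = A.1 ℓ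
      by_cases h : ℓ.val % 2 = 0
      · rw [dif_pos h]
        have e : (⟨2 * (ℓ.val / 2), h2k ⟨ℓ.val / 2, hdiv ℓ⟩⟩ : Fin k) = ℓ :=
          Fin.ext (show 2 * (ℓ.val / 2) = ℓ.val by omega)
        show A.1 ⟨2 * (ℓ.val / 2), h2k ⟨ℓ.val / 2, hdiv ℓ⟩⟩ = A.1 ℓ
        rw [e]
      · rw [dif_neg h]
        exact (((hmain A.1).mp A.2).1 ℓ (by omega)).symm
    right_inv := by
      intro f
      funext i
      apply Subtype.ext
      show (if h : (2*i.val) % 2 = 0 then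
          (f ⟨(2*i.val)/2, hdiv ⟨2*i.val, h2k i⟩⟩).1 else 0) = (f i).1
      rw [dif_pos (Nat.mul_mod_right 2 i.val)]
      have e : (⟨(2*i.val)/2, hdiv ⟨2*i.val, h2k i⟩⟩ : Fin ((k+1)/2)) = i :=
        Fin.ext (show (2*i.val)/2 = i.val by omega)
      rw [e] }⟩⟩
end

section
/- The set ASM^∘_{n,4} of chained circular alternating sign matrices with k = 4 is in bijection with the set of 2n×2n alternating sign matrices, via concatenating A^(1), A^(2) rotated a quarter turn clockwise, A^(3) rotated a half turn, and A^(4) rotated a quarter turn counterclockwise into the four n×n blocks of a 2n×2n matrix. -/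
/-- Chained circular alternating sign matrices with `k = 4`. -/
def IsChainedCircASM4 (n : ℕ) (A : Fin 4 → Matrix (Fin n) (Fin n) ℤ) : Prop :=
  (∀ ℓ i j, A ℓ i j = -1 ∨ A ℓ i j = 0 ∨ A ℓ i j = 1) ∧
  (∀ ℓ : Fin 4, ∀ i : Fin n, ∀ m : ℕ,
    (∑ j ∈ Finset.univ.filter fun j : Fin n => (j : ℕ) < m, A ℓ i j) = 0 ∨
    (∑ j ∈ Finset.univ.filter fun j : Fin n => (j : ℕ) < m, A ℓ i j) = 1) ∧
  (∀ ℓ : Fin 4, ∀ i : Fin n, ∀ m : ℕ,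
    ((∑ j, A (ℓ - 1) i j) +
      ∑ j ∈ Finset.univ.filter fun j : Fin n => (j : ℕ) < m, A ℓ j.rev i) = 0 ∨
    ((∑ j, A (ℓ - 1) i j) +
      ∑ j ∈ Finset.univ.filter fun j : Fin n => (j : ℕ) < m, A ℓ j.rev i) = 1) ∧
  (∑ ℓ : Fin 4, ∑ i, ∑ j, A ℓ i j) = ((2 * n : ℕ) : ℤ)

/-- Concatenate `A^(1)`, `A^(2)` rotated a quarter turn clockwise, `A^(3)` rotated a
half turn, and `A^(4)` rotated a quarter turn counterclockwise into the four `n×n`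
blocks of a `2n×2n` matrix. -/
def glue (n : ℕ) (A : Fin 4 → Matrix (Fin n) (Fin n) ℤ) :
    Matrix (Fin (2 * n)) (Fin (2 * n)) ℤ := fun i j =>
  if hi : (i : ℕ) < n then
    if hj : (j : ℕ) < n then A 0 ⟨i, hi⟩ ⟨j, hj⟩
    else A 1 (Fin.rev ⟨(j : ℕ) - n, by have := j.isLt; omega⟩) ⟨i, hi⟩
  else
    if hj : (j : ℕ) < n then
      A 3 ⟨j, hj⟩ (Fin.rev ⟨(i : ℕ) - n, by have := i.isLt; omega⟩)
    else A 2 (Fin.rev ⟨(i : ℕ) - n, by have := i.isLt; omega⟩)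
           (Fin.rev ⟨(j : ℕ) - n, by have := j.isLt; omega⟩)


namespace CCASM
open Finset
variable {n N : ℕ}

def lo (j : Fin n) : Fin (2 * n) := ⟨j.1, by have := j.2; omega⟩
def hi (j : Fin n) : Fin (2 * n) := ⟨n + j.1, by have := j.2; omega⟩

def pf (f : Fin N → ℤ) (m : ℕ) : ℤ :=
  ∑ j ∈ Finset.univ.filter fun j : Fin N => (j : ℕ) < m, f j

def ext (f : Fin N → ℤ) : ℕ → ℤ := fun j => if h : j < N then f ⟨j, h⟩ else 0

lemma pf_eq (f : Fin N → ℤ) (m : ℕ) :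
    pf f m = ∑ j ∈ Finset.range (min m N), ext f j := by
  unfold pf
  rw [Finset.sum_filter]
  calc ∑ i : Fin N, (if (i : ℕ) < m then f i else 0)
      = ∑ i : Fin N, (fun j : ℕ => if j < m then ext f j else 0) (i : ℕ) :=
        Finset.sum_congr rfl (fun i _ => by simp [ext, i.2])
    _ = ∑ j ∈ Finset.range N, (if j < m then ext f j else 0) :=
        by exact Fin.sum_univ_eq_sum_range (fun j : ℕ => if j < m then ext f j else 0) N
    _ = ∑ j ∈ (Finset.range N).filter (· < m), ext f j := (Finset.sum_filter _ _).symm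
    _ = ∑ j ∈ Finset.range (min m N), ext f j := by
        congr 1; ext a; simp only [Finset.mem_filter, Finset.mem_range]; omega

lemma pf_sat (f : Fin N → ℤ) {m : ℕ} (h : N ≤ m) : pf f m = ∑ j, f j := by
  unfold pf
  have hall : ∀ j ∈ (Finset.univ : Finset (Fin N)), (j : ℕ) < m :=
    fun j _ => lt_of_lt_of_le j.2 h
  rw [Finset.filter_true_of_mem hall]

lemma pf_zero (f : Fin N → ℤ) : pf f 0 = 0 := by simp [pf]

lemma pf_min (f : Fin N → ℤ) (m : ℕ) : pf f m = pf f (min m N) := by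
  rcases le_total m N with h | h
  · rw [min_eq_left h]
  · rw [min_eq_right h, pf_sat f h, pf_sat f le_rfl]

lemma sum_rev' (f : Fin N → ℤ) : ∑ j : Fin N, f j.rev = ∑ j, f j := by
  simpa using Equiv.sum_comp (Fin.revPerm (n := N)) f

lemma pf_rev (f : Fin N → ℤ) (m : ℕ) :
    pf f m + pf (fun j => f j.rev) (N - m) = ∑ j, f j := by
  unfold pf
  have key : ∑ j ∈ univ.filter (fun j : Fin N => (j : ℕ) < N - m), f j.rev
      = ∑ j ∈ univ.filter (fun j : Fin N => ¬ (j : ℕ) < m), f j := by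
    rw [Finset.sum_filter, Finset.sum_filter,
      ← Equiv.sum_comp (Fin.revPerm (n := N)) (fun j : Fin N => if ¬ (j : ℕ) < m then f j else 0)]
    refine Finset.sum_congr rfl fun j _ => ?_
    have hj := j.2
    have hiff : ((j : ℕ) < N - m) ↔ ¬ ((j.rev : ℕ) < m) := by
      rw [Fin.val_rev]; omega
    simp only [Fin.revPerm_apply, hiff]
  rw [key, Finset.sum_filter_add_sum_filter_not]

lemma range_split (F : ℕ → ℤ) (m : ℕ) :
    ∑ j ∈ Finset.range (min m (2 * n)), F j
      = (∑ j ∈ Finset.range (min m n), F j) + ∑ j ∈ Finset.range (min (m - n) n), F (n + j) := by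
  rcases le_or_gt m n with h | h
  · have h1 : min m (2 * n) = m := by omega
    have h2 : min m n = m := by omega
    have h3 : m - n = 0 := by omega
    simp [h1, h2, h3]
  · have h2 : min m (2 * n) = n + min (m - n) n := by omega
    have h3 : min m n = n := by omega
    rw [h2, h3, Finset.sum_range_add]

lemma pf_split (g : Fin (2 * n) → ℤ) (u v : Fin n → ℤ)
    (hu : ∀ j : Fin n, g (lo j) = u j) (hv : ∀ j : Fin n, g (hi j) = v j) (m : ℕ) :
    pf g m = pf u m + pf v (m - n) := by
  rw [pf_eq, pf_eq, pf_eq, range_split]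
  congr 1
  · refine Finset.sum_congr rfl fun j hj => ?_
    rw [Finset.mem_range] at hj
    have hjn : j < n := lt_of_lt_of_le hj (min_le_right _ _)
    have h2 : j < 2 * n := by omega
    simp only [ext, dif_pos h2, dif_pos hjn]
    rw [← hu ⟨j, hjn⟩]
    congr 1
  · refine Finset.sum_congr rfl fun j hj => ?_
    rw [Finset.mem_range] at hj
    have hjn : j < n := lt_of_lt_of_le hj (min_le_right _ _)
    have h2 : n + j < 2 * n := by omega
    simp only [ext, dif_pos h2, dif_pos hjn]
    rw [← hv ⟨j, hjn⟩]
    congr 1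

lemma all_one (g : Fin N → ℤ) (h1 : ∀ i, g i ≤ 1) (h2 : ∑ i, g i = (N : ℤ)) (i : Fin N) :
    g i = 1 := by
  by_contra hne
  have hlt : g i < 1 := lt_of_le_of_ne (h1 i) hne
  have : ∑ j, g j < ∑ _j : Fin N, (1 : ℤ) :=
    Finset.sum_lt_sum (fun j _ => h1 j) ⟨i, Finset.mem_univ i, hlt⟩
  rw [h2] at this
  simp at this

lemma pf_rev_mem (f : Fin N → ℤ) (htot : ∑ j, f j = 1)
    (h : ∀ m, pf f m = 0 ∨ pf f m = 1) (m : ℕ) :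
    pf (fun j => f j.rev) m = 0 ∨ pf (fun j => f j.rev) m = 1 := by
  rcases le_or_gt m N with hm | hm
  · have hk := pf_rev f (N - m)
    have hNm : N - (N - m) = m := by omega
    rw [hNm, htot] at hk
    rcases h (N - m) with h' | h' <;> rw [h'] at hk <;> omega
  · rw [pf_sat _ hm.le, sum_rev', htot]
    right; rfl

variable {n : ℕ} (A : Fin 4 → Matrix (Fin n) (Fin n) ℤ)

lemma rev_lo (c : Fin n) : Fin.rev (lo c) = hi (Fin.rev c) := by
  have := c.2; apply Fin.ext; simp [lo, hi, Fin.val_rev]; omega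

lemma rev_hi (c : Fin n) : Fin.rev (hi c) = lo (Fin.rev c) := by
  have := c.2; apply Fin.ext; simp [lo, hi, Fin.val_rev]; omega

lemma glue_ll (i j : Fin n) : glue n A (lo i) (lo j) = A 0 i j := by
  have hi' : ((lo i : Fin (2*n)) : ℕ) < n := i.2
  have hj' : ((lo j : Fin (2*n)) : ℕ) < n := j.2
  simp only [glue, dif_pos hi', dif_pos hj']
  congr 1 <;> exact Fin.ext rfl

lemma glue_lh (i j : Fin n) : glue n A (lo i) (hi j) = A 1 j.rev i := by
  have hi' : ((lo i : Fin (2*n)) : ℕ) < n := i.2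
  have hj' : ¬ ((hi j : Fin (2*n)) : ℕ) < n := by simp [hi]
  simp only [glue, dif_pos hi', dif_neg hj']
  congr 1
  apply Fin.ext; simp [hi]

lemma glue_hl (i j : Fin n) : glue n A (hi i) (lo j) = A 3 j (Fin.rev i) := by
  have hi' : ¬ ((hi i : Fin (2*n)) : ℕ) < n := by simp [hi]
  have hj' : ((lo j : Fin (2*n)) : ℕ) < n := j.2
  simp only [glue, dif_pos hj', dif_neg hi']
  congr 1
  apply Fin.ext; simp [hi]

lemma glue_hh (i j : Fin n) : glue n A (hi i) (hi j) = A 2 i.rev j.rev := by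
  have hi' : ¬ ((hi i : Fin (2*n)) : ℕ) < n := by simp [hi]
  have hj' : ¬ ((hi j : Fin (2*n)) : ℕ) < n := by simp [hi]
  simp only [glue, dif_neg hi', dif_neg hj']
  congr 1 <;> apply Fin.ext <;> simp [hi]

lemma L1 (r : Fin n) (m : ℕ) :
    pf (fun j => glue n A (lo r) j) m
      = pf (fun j => A 0 r j) m + pf (fun j => A 1 j.rev r) (m - n) :=
  pf_split _ _ _ (fun j => glue_ll A r j) (fun j => glue_lh A r j) m

lemma L2 (c : Fin n) (m : ℕ) :
    pf (fun i => glue n A i (Fin.rev (lo c))) m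
      = pf (fun j => A 1 c j) m + pf (fun j => A 2 j.rev c) (m - n) := by
  refine pf_split _ _ _ (fun j => ?_) (fun j => ?_) m
  · rw [rev_lo, glue_lh, Fin.rev_rev]
  · rw [rev_lo, glue_hh, Fin.rev_rev]

lemma L3 (r : Fin n) (m : ℕ) :
    pf (fun j => glue n A (Fin.rev (lo r)) j.rev) m
      = pf (fun j => A 2 r j) m + pf (fun j => A 3 j.rev r) (m - n) := by
  refine pf_split _ _ _ (fun j => ?_) (fun j => ?_) m
  · rw [rev_lo, rev_lo, glue_hh, Fin.rev_rev, Fin.rev_rev]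
  · rw [rev_lo, rev_hi, glue_hl, Fin.rev_rev]

lemma L4 (c : Fin n) (m : ℕ) :
    pf (fun i => glue n A i.rev (lo c)) m
      = pf (fun j => A 3 c j) m + pf (fun j => A 0 j.rev c) (m - n) := by
  refine pf_split _ _ _ (fun j => ?_) (fun j => ?_) m
  · rw [rev_lo, glue_hl, Fin.rev_rev]
  · rw [rev_hi, glue_ll]

lemma sum_split' (g : Fin (2 * n) → ℤ) :
    ∑ i, g i = (∑ r : Fin n, g (lo r)) + ∑ r : Fin n, g (Fin.rev (lo r)) := by
  have h0 : ∑ i, g i = pf g (2 * n) := (pf_sat g le_rfl).symm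
  rw [h0, pf_split g (fun r => g (lo r)) (fun r => g (hi r)) (fun _ => rfl) (fun _ => rfl),
    pf_sat _ (by omega : n ≤ 2 * n), pf_sat _ (by omega : n ≤ 2 * n - n)]
  congr 1
  rw [← sum_rev' (fun r : Fin n => g (hi r))]
  exact Finset.sum_congr rfl fun r _ => by rw [rev_lo]

lemma glue_total :
    ∑ i, ∑ j, glue n A i j = ∑ ℓ : Fin 4, ∑ i, ∑ j, A ℓ i j := by
  rw [sum_split' (fun i => ∑ j, glue n A i j)]
  have h1 : ∀ r : Fin n, ∑ j, glue n A (lo r) j = (∑ j, A 0 r j) + ∑ j, A 1 j r := by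
    intro r
    rw [← pf_sat (fun j => glue n A (lo r) j) (le_refl (2 * n)), L1,
      pf_sat _ (by omega : n ≤ 2 * n), pf_sat _ (by omega : n ≤ 2 * n - n),
      sum_rev' (fun j => A 1 j r)]
  have h2 : ∀ r : Fin n, ∑ j, glue n A (Fin.rev (lo r)) j = (∑ j, A 2 r j) + ∑ j, A 3 j r := by
    intro r
    rw [← sum_rev' (fun j => glue n A (Fin.rev (lo r)) j),
      ← pf_sat (fun j => glue n A (Fin.rev (lo r)) j.rev) (le_refl (2 * n)), L3,
      pf_sat _ (by omega : n ≤ 2 * n), pf_sat _ (by omega : n ≤ 2 * n - n),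
      sum_rev' (fun j => A 3 j r)]
  rw [Finset.sum_congr rfl fun r _ => h1 r, Finset.sum_congr rfl fun r _ => h2 r,
    Fin.sum_univ_four (fun ℓ => ∑ i, ∑ j, A ℓ i j), Finset.sum_add_distrib,
    Finset.sum_add_distrib, Finset.sum_comm (f := fun r j => A 1 j r),
    Finset.sum_comm (f := fun r j => A 3 j r)]
  ring

lemma sub14 : (1 : Fin 4) - 1 = 0 := by decide
lemma sub24 : (2 : Fin 4) - 1 = 1 := by decide
lemma sub34 : (3 : Fin 4) - 1 = 2 := by decide
lemma sub04 : (0 : Fin 4) - 1 = 3 := by decide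

lemma rep_lo (i : Fin (2 * n)) (hl : (i : ℕ) < n) : i = lo ⟨i.1, hl⟩ := Fin.ext rfl

lemma rep_rev (i : Fin (2 * n)) (hl : n ≤ (i : ℕ)) :
    ∃ r : Fin n, i = Fin.rev (lo r) :=
  ⟨⟨2 * n - 1 - i.1, by have := i.2; omega⟩, by
    apply Fin.ext; simp only [Fin.val_rev, lo]; have := i.2; omega⟩

theorem forward (h : IsChainedCircASM4 n A) : IsASM (2 * n) (glue n A) := by
  obtain ⟨hA1, hA2, hA3, hA4⟩ := h
  have P1 : ∀ (r : Fin n) (m : ℕ),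
      pf (fun j => glue n A (lo r) j) m = 0 ∨ pf (fun j => glue n A (lo r) j) m = 1 := by
    intro r m
    rw [L1]
    rcases le_or_gt m n with hm | hm
    · rw [Nat.sub_eq_zero_of_le hm, pf_zero, add_zero]
      exact hA2 0 r m
    · rw [pf_sat _ hm.le]
      have hx := hA3 1 r (m - n)
      rw [sub14] at hx
      exact hx
  have P2 : ∀ (c : Fin n) (m : ℕ),
      pf (fun i => glue n A i (Fin.rev (lo c))) m = 0 ∨
        pf (fun i => glue n A i (Fin.rev (lo c))) m = 1 := by
    intro c m
    rw [L2]
    rcases le_or_gt m n with hm | hm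
    · rw [Nat.sub_eq_zero_of_le hm, pf_zero, add_zero]
      exact hA2 1 c m
    · rw [pf_sat _ hm.le]
      have hx := hA3 2 c (m - n)
      rw [sub24] at hx
      exact hx
  have P3 : ∀ (r : Fin n) (m : ℕ),
      pf (fun j => glue n A (Fin.rev (lo r)) j.rev) m = 0 ∨
        pf (fun j => glue n A (Fin.rev (lo r)) j.rev) m = 1 := by
    intro r m
    rw [L3]
    rcases le_or_gt m n with hm | hm
    · rw [Nat.sub_eq_zero_of_le hm, pf_zero, add_zero]
      exact hA2 2 r m
    · rw [pf_sat _ hm.le]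
      have hx := hA3 3 r (m - n)
      rw [sub34] at hx
      exact hx
  have P4 : ∀ (c : Fin n) (m : ℕ),
      pf (fun i => glue n A i.rev (lo c)) m = 0 ∨
        pf (fun i => glue n A i.rev (lo c)) m = 1 := by
    intro c m
    rw [L4]
    rcases le_or_gt m n with hm | hm
    · rw [Nat.sub_eq_zero_of_le hm, pf_zero, add_zero]
      exact hA2 3 c m
    · rw [pf_sat _ hm.le]
      have hx := hA3 0 c (m - n)
      rw [sub04] at hx
      exact hx
  have rowsum01 : ∀ i : Fin (2 * n),
      (∑ j, glue n A i j) = 0 ∨ (∑ j, glue n A i j) = 1 := by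
    intro i
    rcases lt_or_ge (i : ℕ) n with hl | hl
    · rw [rep_lo i hl, ← pf_sat (fun j => glue n A (lo ⟨i.1, hl⟩) j) (le_refl (2 * n))]
      exact P1 _ (2 * n)
    · obtain ⟨r, hr⟩ := rep_rev i hl
      rw [hr, ← sum_rev' (fun j => glue n A (Fin.rev (lo r)) j),
        ← pf_sat (fun j => glue n A (Fin.rev (lo r)) j.rev) (le_refl (2 * n))]
      exact P3 r (2 * n)
  have colsum01 : ∀ j : Fin (2 * n),
      (∑ i, glue n A i j) = 0 ∨ (∑ i, glue n A i j) = 1 := by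
    intro j
    rcases lt_or_ge (j : ℕ) n with hl | hl
    · rw [rep_lo j hl, ← sum_rev' (fun i => glue n A i (lo ⟨j.1, hl⟩)),
        ← pf_sat (fun i => glue n A i.rev (lo ⟨j.1, hl⟩)) (le_refl (2 * n))]
      exact P4 _ (2 * n)
    · obtain ⟨c, hc⟩ := rep_rev j hl
      rw [hc, ← pf_sat (fun i => glue n A i (Fin.rev (lo c))) (le_refl (2 * n))]
      exact P2 c (2 * n)
  have rowsum1 : ∀ i : Fin (2 * n), (∑ j, glue n A i j) = 1 := by
    apply all_one (g := fun i => ∑ j, glue n A i j)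
    · intro i; rcases rowsum01 i with h' | h' <;> rw [h'] <;> omega
    · rw [glue_total]; exact hA4
  have colsum1 : ∀ j : Fin (2 * n), (∑ i, glue n A i j) = 1 := by
    apply all_one (g := fun j => ∑ i, glue n A i j)
    · intro j; rcases colsum01 j with h' | h' <;> rw [h'] <;> omega
    · rw [Finset.sum_comm, glue_total]; exact hA4
  have hrowp : ∀ (i : Fin (2 * n)) (m : ℕ),
      pf (fun j => glue n A i j) m = 0 ∨ pf (fun j => glue n A i j) m = 1 := by
    intro i m
    rcases lt_or_ge (i : ℕ) n with hl | hl
    · rw [rep_lo i hl]; exact P1 _ m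
    · obtain ⟨r, hr⟩ := rep_rev i hl
      rw [hr]
      have htot : ∑ j : Fin (2 * n), (fun j : Fin (2 * n) => glue n A (Fin.rev (lo r)) j.rev) j = 1 := by
        rw [sum_rev' (fun j => glue n A (Fin.rev (lo r)) j)]
        exact rowsum1 _
      have key := pf_rev_mem (fun j => glue n A (Fin.rev (lo r)) j.rev) htot (P3 r) m
      simp only [Fin.rev_rev] at key
      exact key
  have hcolp : ∀ (j : Fin (2 * n)) (m : ℕ),
      pf (fun i => glue n A i j) m = 0 ∨ pf (fun i => glue n A i j) m = 1 := by
    intro j m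
    rcases lt_or_ge (j : ℕ) n with hl | hl
    · rw [rep_lo j hl]
      have htot : ∑ i : Fin (2 * n), (fun i : Fin (2 * n) => glue n A i.rev (lo ⟨j.1, hl⟩)) i = 1 := by
        rw [sum_rev' (fun i => glue n A i (lo ⟨j.1, hl⟩))]
        exact colsum1 _
      have key := pf_rev_mem (fun i => glue n A i.rev (lo ⟨j.1, hl⟩)) htot (P4 _) m
      simp only [Fin.rev_rev] at key
      exact key
    · obtain ⟨c, hc⟩ := rep_rev j hl
      rw [hc]; exact P2 c m
  refine ⟨?_, rowsum1, colsum1, hrowp, hcolp⟩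
  intro i j
  simp only [glue]
  split_ifs <;> exact hA1 _ _ _

def unglue (nn : ℕ) (M : Matrix (Fin (2 * nn)) (Fin (2 * nn)) ℤ) :
    Fin 4 → Matrix (Fin nn) (Fin nn) ℤ
  | 0 => fun i j => M (lo i) (lo j)
  | 1 => fun i j => M (lo j) (Fin.rev (lo i))
  | 2 => fun i j => M (Fin.rev (lo i)) (Fin.rev (lo j))
  | 3 => fun i j => M (Fin.rev (lo j)) (lo i)

lemma rep_hi (i : Fin (2 * n)) (hl : n ≤ (i : ℕ)) : ∃ a : Fin n, i = hi a :=
  ⟨⟨i.1 - n, by have := i.2; omega⟩, by apply Fin.ext; simp only [hi]; have := i.2; omega⟩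

lemma glue_unglue (M : Matrix (Fin (2 * n)) (Fin (2 * n)) ℤ) :
    glue n (unglue n M) = M := by
  funext i j
  have rep : ∀ x : Fin (2 * n), (∃ a : Fin n, x = lo a) ∨ ∃ a : Fin n, x = hi a := by
    intro x
    rcases lt_or_ge (x : ℕ) n with hl | hl
    · exact Or.inl ⟨⟨x.1, hl⟩, rep_lo x hl⟩
    · exact Or.inr (rep_hi x hl)
  rcases rep i with ⟨a, rfl⟩ | ⟨a, rfl⟩ <;> rcases rep j with ⟨b, rfl⟩ | ⟨b, rfl⟩
  · rw [glue_ll]; rfl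
  · rw [glue_lh]
    show M (lo a) (Fin.rev (lo b.rev)) = _
    rw [rev_lo, Fin.rev_rev]
  · rw [glue_hl]
    show M (Fin.rev (lo a.rev)) (lo b) = _
    rw [rev_lo, Fin.rev_rev]
  · rw [glue_hh]
    show M (Fin.rev (lo a.rev)) (Fin.rev (lo b.rev)) = _
    rw [rev_lo, rev_lo, Fin.rev_rev, Fin.rev_rev]

lemma unglue_glue : unglue n (glue n A) = A := by
  funext ℓ i j
  fin_cases ℓ
  · exact glue_ll A i j
  · show glue n A (lo j) (Fin.rev (lo i)) = _
    rw [rev_lo, glue_lh, Fin.rev_rev]; rfl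
  · show glue n A (Fin.rev (lo i)) (Fin.rev (lo j)) = _
    rw [rev_lo, rev_lo, glue_hh, Fin.rev_rev, Fin.rev_rev]; rfl
  · show glue n A (Fin.rev (lo j)) (lo i) = _
    rw [rev_lo, glue_hl, Fin.rev_rev]; rfl

variable (M : Matrix (Fin (2 * n)) (Fin (2 * n)) ℤ)

lemma L1' (r : Fin n) (m : ℕ) :
    pf (fun j => M (lo r) j) m
      = pf (fun j => unglue n M 0 r j) m + pf (fun j => unglue n M 1 j.rev r) (m - n) := by
  have hx := L1 (unglue n M) r m
  rwa [glue_unglue] at hx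

lemma L2' (c : Fin n) (m : ℕ) :
    pf (fun i => M i (Fin.rev (lo c))) m
      = pf (fun j => unglue n M 1 c j) m + pf (fun j => unglue n M 2 j.rev c) (m - n) := by
  have hx := L2 (unglue n M) c m
  rwa [glue_unglue] at hx

lemma L3' (r : Fin n) (m : ℕ) :
    pf (fun j => M (Fin.rev (lo r)) j.rev) m
      = pf (fun j => unglue n M 2 r j) m + pf (fun j => unglue n M 3 j.rev r) (m - n) := by
  have hx := L3 (unglue n M) r m
  rwa [glue_unglue] at hx

lemma L4' (c : Fin n) (m : ℕ) :
    pf (fun i => M i.rev (lo c)) m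
      = pf (fun j => unglue n M 3 c j) m + pf (fun j => unglue n M 0 j.rev c) (m - n) := by
  have hx := L4 (unglue n M) c m
  rwa [glue_unglue] at hx

theorem backward (h : IsASM (2 * n) M) : IsChainedCircASM4 n (unglue n M) := by
  obtain ⟨he, hr, hc, hpr, hpc⟩ := h
  have Qr : ∀ (i : Fin (2 * n)) (m : ℕ),
      pf (fun j => M i j) m = 0 ∨ pf (fun j => M i j) m = 1 := hpr
  have Qc : ∀ (j : Fin (2 * n)) (m : ℕ),
      pf (fun i => M i j) m = 0 ∨ pf (fun i => M i j) m = 1 := hpc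
  have Qrrev : ∀ (i : Fin (2 * n)) (m : ℕ),
      pf (fun j => M i j.rev) m = 0 ∨ pf (fun j => M i j.rev) m = 1 :=
    fun i m => pf_rev_mem (fun j => M i j) (hr i) (Qr i) m
  have Qcrev : ∀ (j : Fin (2 * n)) (m : ℕ),
      pf (fun i => M i.rev j) m = 0 ∨ pf (fun i => M i.rev j) m = 1 :=
    fun j m => pf_rev_mem (fun i => M i j) (hc j) (Qc j) m
  refine ⟨?_, ?_, ?_, ?_⟩
  · intro ℓ i j
    fin_cases ℓ
    · exact he (lo i) (lo j)
    · exact he (lo j) (Fin.rev (lo i))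
    · exact he (Fin.rev (lo i)) (Fin.rev (lo j))
    · exact he (Fin.rev (lo j)) (lo i)
  · intro ℓ r m
    fin_cases ℓ
    · show pf (fun j => unglue n M 0 r j) m = 0 ∨ pf (fun j => unglue n M 0 r j) m = 1
      rw [pf_min]
      have hx := L1' M r (min m n)
      rw [Nat.sub_eq_zero_of_le (min_le_right m n), pf_zero, add_zero] at hx
      rw [← hx]
      exact Qr (lo r) (min m n)
    · show pf (fun j => unglue n M 1 r j) m = 0 ∨ pf (fun j => unglue n M 1 r j) m = 1
      rw [pf_min]
      have hx := L2' M r (min m n)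
      rw [Nat.sub_eq_zero_of_le (min_le_right m n), pf_zero, add_zero] at hx
      rw [← hx]
      exact Qc (Fin.rev (lo r)) (min m n)
    · show pf (fun j => unglue n M 2 r j) m = 0 ∨ pf (fun j => unglue n M 2 r j) m = 1
      rw [pf_min]
      have hx := L3' M r (min m n)
      rw [Nat.sub_eq_zero_of_le (min_le_right m n), pf_zero, add_zero] at hx
      rw [← hx]
      exact Qrrev (Fin.rev (lo r)) (min m n)
    · show pf (fun j => unglue n M 3 r j) m = 0 ∨ pf (fun j => unglue n M 3 r j) m = 1
      rw [pf_min]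
      have hx := L4' M r (min m n)
      rw [Nat.sub_eq_zero_of_le (min_le_right m n), pf_zero, add_zero] at hx
      rw [← hx]
      exact Qcrev (lo r) (min m n)
  · intro ℓ r m
    fin_cases ℓ
    · show (∑ j, unglue n M 3 r j) + pf (fun j => unglue n M 0 j.rev r) m = 0 ∨
        (∑ j, unglue n M 3 r j) + pf (fun j => unglue n M 0 j.rev r) m = 1
      rw [pf_min (fun j => unglue n M 0 j.rev r) m,
        (pf_sat (fun j => unglue n M 3 r j) (by omega : n ≤ n + min m n)).symm]
      have hx := L4' M r (n + min m n)
      rw [(by omega : (n + min m n) - n = min m n)] at hx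
      rw [← hx]
      exact Qcrev (lo r) _
    · show (∑ j, unglue n M 0 r j) + pf (fun j => unglue n M 1 j.rev r) m = 0 ∨
        (∑ j, unglue n M 0 r j) + pf (fun j => unglue n M 1 j.rev r) m = 1
      rw [pf_min (fun j => unglue n M 1 j.rev r) m,
        (pf_sat (fun j => unglue n M 0 r j) (by omega : n ≤ n + min m n)).symm]
      have hx := L1' M r (n + min m n)
      rw [(by omega : (n + min m n) - n = min m n)] at hx
      rw [← hx]
      exact Qr (lo r) _
    · show (∑ j, unglue n M 1 r j) + pf (fun j => unglue n M 2 j.rev r) m = 0 ∨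
        (∑ j, unglue n M 1 r j) + pf (fun j => unglue n M 2 j.rev r) m = 1
      rw [pf_min (fun j => unglue n M 2 j.rev r) m,
        (pf_sat (fun j => unglue n M 1 r j) (by omega : n ≤ n + min m n)).symm]
      have hx := L2' M r (n + min m n)
      rw [(by omega : (n + min m n) - n = min m n)] at hx
      rw [← hx]
      exact Qc (Fin.rev (lo r)) _
    · show (∑ j, unglue n M 2 r j) + pf (fun j => unglue n M 3 j.rev r) m = 0 ∨
        (∑ j, unglue n M 2 r j) + pf (fun j => unglue n M 3 j.rev r) m = 1
      rw [pf_min (fun j => unglue n M 3 j.rev r) m,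
        (pf_sat (fun j => unglue n M 2 r j) (by omega : n ≤ n + min m n)).symm]
      have hx := L3' M r (n + min m n)
      rw [(by omega : (n + min m n) - n = min m n)] at hx
      rw [← hx]
      exact Qrrev (Fin.rev (lo r)) _
  · show (∑ ℓ : Fin 4, ∑ i, ∑ j, unglue n M ℓ i j) = ((2 * n : ℕ) : ℤ)
    rw [← glue_total (unglue n M), glue_unglue]
    calc ∑ i, ∑ j, M i j = ∑ _i : Fin (2 * n), (1 : ℤ) :=
          Finset.sum_congr rfl (fun i _ => hr i)
      _ = ((2 * n : ℕ) : ℤ) := by simp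

end CCASM

/-- `ASM°_{n,4}` is in bijection with `2n×2n` alternating sign matrices via the
concatenation map `glue`. -/
theorem chained_circ_asm_k4 (n : ℕ) :
    ∃ e : {A : Fin 4 → Matrix (Fin n) (Fin n) ℤ // IsChainedCircASM4 n A} ≃
        {M : Matrix (Fin (2 * n)) (Fin (2 * n)) ℤ // IsASM (2 * n) M},
      ∀ A, (e A).val = glue n A.val := by
  refine ⟨{ toFun := fun A => ⟨glue n A.1, CCASM.forward A.1 A.2⟩
            invFun := fun M => ⟨CCASM.unglue n M.1, CCASM.backward M.1 M.2⟩
            left_inv := fun A => Subtype.ext (CCASM.unglue_glue A.1)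
            right_inv := fun M => Subtype.ext (CCASM.glue_unglue M.1) }, fun A => rfl⟩
end
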